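/- If k ≥ 4 and T ≠ K_k is a Gallai tree (a connected graph in which every block is a complete graph or an odd cycle) with maximum degree at most k−1, then 2·e(T) ≤ (k−2)·|V(T)| + 2·β_k(T), where β_k(T) is the independence number of the subgraph of T induced on the vertices of degree exactly k−1. -/

import Mathlib

open SimpleGraph

namespace Paper

variable {V : Type*} {W : Type*}

/-- `s` is an independent set in `G`. -/
def IsIndepSet (G : SimpleGraph V) (s : Set V) : Prop :=
  ∀ ⦃u⦄, u ∈ s → ∀ ⦃v⦄, v ∈ s → ¬ G.Adj u v

/-- The independence number of `G`. -/
noncomputable def indepNum (G : SimpleGraph V) : ℕ :=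
  sSup {n | ∃ s : Finset V, IsIndepSet G ↑s ∧ s.card = n}

/-- The number of edges of `G`. -/
noncomputable def edgeCount (G : SimpleGraph V) : ℕ := Nat.card G.edgeSet

/-- The degree of a vertex. -/
noncomputable def deg (G : SimpleGraph V) (v : V) : ℕ := Nat.card (G.neighborSet v)

/-- The number of edges with exactly one endpoint in `I`. -/
noncomputable def crossCount (G : SimpleGraph V) (I : Set V) : ℕ :=
  Nat.card {p : V × V // p.1 ∈ I ∧ p.2 ∉ I ∧ G.Adj p.1 p.2}

/-- The maximum independent cover number of `G`. -/
noncomputable def mic (G : SimpleGraph V) : ℕ :=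
  sSup {n | ∃ I : Set V, IsIndepSet G I ∧ crossCount G I = n}

/-- A graph is an odd cycle iff it is connected, 2-regular, with an odd number of vertices. -/
def IsOddCycle (H : SimpleGraph W) : Prop :=
  H.Connected ∧ (∀ v, deg H v = 2) ∧ Odd (Nat.card W)

/-- `B` is a block of `G`: a maximal set inducing a connected subgraph with no cutvertex. -/
def IsBlock (G : SimpleGraph V) (B : Set V) : Prop :=
  ((G.induce B).Connected ∧ ∀ v ∈ B, (G.induce (B \ {v})).Connected) ∧
    ∀ B' : Set V, B ⊆ B' →
      ((G.induce B').Connected ∧ ∀ v ∈ B', (G.induce (B' \ {v})).Connected) → B' = B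

/-- A Gallai tree: a connected graph each of whose blocks is complete or an odd cycle. -/
def IsGallaiTree (G : SimpleGraph V) : Prop :=
  G.Connected ∧ ∀ B : Set V, IsBlock G B → (G.induce B = ⊤ ∨ IsOddCycle (G.induce B))

/-- `G` is `r`-choosable: every assignment of lists of size `r` admits a proper coloring. -/
def Choosable (G : SimpleGraph V) (r : ℕ) : Prop :=
  ∀ L : V → Finset ℕ, (∀ v, (L v).card = r) →
    ∃ c : V → ℕ, (∀ v, c v ∈ L v) ∧ ∀ ⦃u v⦄, G.Adj u v → c u ≠ c v

/-- `G` is `k`-list-critical: not `(k-1)`-choosable but every proper subgraph is. -/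
def ListCritical (k : ℕ) (G : SimpleGraph V) : Prop :=
  ¬ Choosable G (k - 1) ∧ ∀ H : G.Subgraph, H ≠ ⊤ → Choosable H.coe (k - 1)

end Paper

open Paper

/-!
Induction on the number of vertices, writing `k = m + 2`. Call `A` pendant at `x` if `x ∉ A`,
`T[A]` is connected and all neighbours of `A` lie in `A ∪ {x}`. Such sets exist, and one with
`|A|` minimal makes `A ∪ {x}` a block, since a cutvertex `v ∈ A` of it would cut off a smaller
pendant set at `v`. In a Gallai tree this block is `d`-regular, with `d = |A| ≤ m` (complete,
as `T ≠ K_k`) or `d = 2 ≤ m` (cycle); also `d = |N(x) ∩ A| ≤ |A|`.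

Deleting `A` leaves a Gallai tree `T'`, whose blocks are blocks of `T`, and only `x` loses degree,
so `β_k(T') ≤ β_k(T)`. The degree sum drops by `d (|A| + 1)`, which is at most `m |A|` when
`d < m`. If `d = m` and `x` has a neighbour `y` outside `A ∪ {x}`, it has exactly one, and
`A ∪ {x}` is pendant at `y`. Deleting it lowers the degree sum by `m |A ∪ {x}| + 2`, but now `x`
has degree `k - 1` and no neighbour among the vertices of degree `k - 1` in `T'`, so
`β_k(T) ≥ β_k(T') + 1`. If `x` has no neighbour outside `A`, then `T` is the block itself.
-/

namespace Paper

open SimpleGraph Set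

variable {V W : Type*} {T : SimpleGraph V}

/-! ### Degrees, edges and independence numbers -/

lemma deg_eq_ncard (T : SimpleGraph V) (v : V) : deg T v = (T.neighborSet v).ncard :=
  Nat.card_coe_set_eq _

lemma deg_induce (S : Set V) (v : S) : deg (T.induce S) v = (S ∩ T.neighborSet v).ncard := by
  rw [deg_eq_ncard, neighborSet_induce, ← ncard_image_of_injective _ Subtype.val_injective,
    Subtype.image_preimage_coe]

lemma deg_eq_ncard_add_ncard [Finite V] (S : Set V) (v : V) :
    deg T v = (S ∩ T.neighborSet v).ncard + (Sᶜ ∩ T.neighborSet v).ncard := by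
  rw [deg_eq_ncard, inter_comm S, inter_comm Sᶜ, ← sdiff_eq,
    ncard_inter_add_ncard_sdiff_eq_ncard]

lemma deg_induce_add_ncard [Finite V] (S : Set V) (v : S) :
    deg (T.induce S) v + (Sᶜ ∩ T.neighborSet v).ncard = deg T v := by
  rw [deg_induce, deg_eq_ncard_add_ncard S]

lemma deg_induce_le [Finite V] (S : Set V) (v : S) : deg (T.induce S) v ≤ deg T v :=
  (deg_induce_add_ncard S v).symm ▸ Nat.le_add_right _ _

lemma deg_induce_of_neighborSet_subset [Finite V] {S : Set V} {v : V} (hv : v ∈ S)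
    (h : T.neighborSet v ⊆ S) : deg (T.induce S) ⟨v, hv⟩ = deg T v := by
  rw [deg_induce, deg_eq_ncard, inter_eq_right.mpr h]

lemma deg_iso {G : SimpleGraph V} {H : SimpleGraph W} (e : G ≃g H) (v : V) :
    deg H (e v) = deg G v :=
  (Nat.card_congr (e.mapNeighborSet v)).symm

lemma deg_top [Finite V] (v : V) : deg (⊤ : SimpleGraph V) v = Nat.card V - 1 := by
  rw [deg_eq_ncard, neighborSet_top, ncard_compl, ncard_singleton]

lemma finsum_mem_eq_mul_ncard {A : Set V} (hA : A.Finite) {f : V → ℕ} {c : ℕ}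
    (h : ∀ a ∈ A, f a = c) : ∑ᶠ a ∈ A, f a = c * A.ncard := by
  rw [finsum_mem_congr rfl h, finsum_mem_eq_finite_toFinset_sum _ hA, Finset.sum_const,
    smul_eq_mul, ncard_eq_toFinset_card A hA, mul_comm]

lemma two_mul_edgeCount [Fintype V] (T : SimpleGraph V) : 2 * edgeCount T = ∑ v, deg T v := by
  classical
  rw [edgeCount, Nat.card_eq_fintype_card, ← edgeFinset_card, ← sum_degrees_eq_twice_card_edges]
  refine Finset.sum_congr rfl fun v _ => ?_
  rw [deg, Nat.card_eq_fintype_card, card_neighborSet_eq_degree]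

lemma indepNum_eq (G : SimpleGraph V) : Paper.indepNum G = G.indepNum := by
  have h : ∀ s : Finset V, IsIndepSet G ↑s ↔ G.IsIndepSet ↑s := fun s =>
    ⟨fun hs _ hu _ hv _ => hs hu hv, fun hs u hu v hv huv => hs hu hv huv.ne huv⟩
  simp only [Paper.indepNum, SimpleGraph.indepNum, isNIndepSet_iff, h]

lemma isIndepSet_image {G : SimpleGraph V} {H : SimpleGraph W} (f : G ↪g H) {s : Set V}
    (hs : G.IsIndepSet s) : H.IsIndepSet (f '' s) := by
  rintro _ ⟨a, ha, rfl⟩ _ ⟨b, hb, rfl⟩ hab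
  exact f.map_adj_iff.not.mpr (hs ha hb fun h => hab (h ▸ rfl))

lemma indepNum_add_one_le_of_embedding [Finite W] {G : SimpleGraph V} {H : SimpleGraph W}
    (f : G ↪g H) {z : W} (hz : ∀ v, f v ≠ z ∧ ¬H.Adj z (f v)) :
    G.indepNum + 1 ≤ H.indepNum := by
  classical
  obtain ⟨s, hs⟩ := G.exists_isNIndepSet_indepNum
  have hzs : z ∉ s.map f.toEmbedding := by simp [hz]
  have hind : H.IsIndepSet ↑(insert z (s.map f.toEmbedding)) := by
    rw [Finset.coe_insert, Finset.coe_map]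
    refine Set.Pairwise.insert (isIndepSet_image f hs.isIndepSet) fun _ ⟨v, _, hv⟩ _ => ?_
    subst hv
    exact ⟨(hz v).2, fun h => (hz v).2 h.symm⟩
  simpa [Finset.card_insert_of_notMem hzs, hs.card_eq] using hind.card_le_indepNum

lemma indepNum_le_of_embedding [Finite W] {G : SimpleGraph V} {H : SimpleGraph W}
    (f : G ↪g H) : G.indepNum ≤ H.indepNum := by
  classical
  obtain ⟨s, hs⟩ := G.exists_isNIndepSet_indepNum
  have hind : H.IsIndepSet ↑(s.map f.toEmbedding) := by
    rw [Finset.coe_map]; exact isIndepSet_image f hs.isIndepSet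
  simpa [hs.card_eq] using hind.card_le_indepNum

noncomputable def indepNumDegEq (d : ℕ) (T : SimpleGraph V) : ℕ :=
  (T.induce {v | deg T v = d}).indepNum

/-! ### Reachability inside a vertex set -/

def ReachableIn (T : SimpleGraph V) (S : Set V) : V → V → Prop :=
  Relation.ReflTransGen fun a b => a ∈ S ∧ b ∈ S ∧ T.Adj a b

lemma ReachableIn.symm {S : Set V} {u w : V} (h : ReachableIn T S u w) :
    ReachableIn T S w u := by
  induction h with
  | refl => exact Relation.ReflTransGen.refl
  | tail _ hbc ih => exact Relation.ReflTransGen.head ⟨hbc.2.1, hbc.1, hbc.2.2.symm⟩ ih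

lemma ReachableIn.mem_of_closed {S K : Set V} {u w : V} (h : ReachableIn T S u w)
    (hu : u ∈ K) (hK : ∀ a ∈ K, ∀ b ∈ S, T.Adj a b → b ∈ K) : w ∈ K := by
  induction h with
  | refl => exact hu
  | tail _ hbc ih => exact hK _ ih _ hbc.2.1 hbc.2.2

lemma ReachableIn.mem {S : Set V} {u w : V} (h : ReachableIn T S u w) (hu : u ∈ S) : w ∈ S :=
  h.mem_of_closed hu fun _ _ _ hb _ => hb

lemma reachableIn_of_reachable {S : Set V} {u w : S} (h : (T.induce S).Reachable u w) :
    ReachableIn T S u w :=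
  ((reachable_iff_reflTransGen u w).mp h).lift _ fun a b hab => ⟨a.2, b.2, hab⟩

lemma ReachableIn.reachable {S : Set V} {u w : V} (h : ReachableIn T S u w) (hu : u ∈ S) :
    (T.induce S).Reachable ⟨u, hu⟩ ⟨w, h.mem hu⟩ := by
  induction h with
  | refl => rfl
  | tail _ hbc ih => exact ih.trans (Adj.reachable (by exact hbc.2.2))

lemma induce_connected_iff_reachableIn {S : Set V} {x : V} (hx : x ∈ S) :
    (T.induce S).Connected ↔ ∀ w ∈ S, ReachableIn T S x w := by
  refine ⟨fun h w hw => reachableIn_of_reachable (h.preconnected ⟨x, hx⟩ ⟨w, hw⟩),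
    fun h => ?_⟩
  exact (connected_iff_exists_forall_reachable _).mpr
    ⟨⟨x, hx⟩, fun w => (h w w.2).reachable hx⟩

lemma subset_of_closed {S K : Set V} (hS : (T.induce S).Connected) {u : V} (huS : u ∈ S)
    (huK : u ∈ K) (hK : ∀ a ∈ K, ∀ b ∈ S, T.Adj a b → b ∈ K) : S ⊆ K := fun w hw =>
  ((induce_connected_iff_reachableIn huS).mp hS w hw).mem_of_closed huK hK

lemma eq_univ_of_closed (hT : T.Connected) {K : Set V} {u : V} (hu : u ∈ K)
    (hK : ∀ a ∈ K, ∀ b, T.Adj a b → b ∈ K) : K = univ :=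
  eq_univ_of_univ_subset <| subset_of_closed ((induceUnivIso T).connected_iff.mpr hT)
    (mem_univ u) hu fun a ha b _ hab => hK a ha b hab

def componentIn (T : SimpleGraph V) (S : Set V) (u : V) : Set V := {w | ReachableIn T S u w}

lemma mem_componentIn_self {S : Set V} {u : V} : u ∈ componentIn T S u :=
  Relation.ReflTransGen.refl

lemma componentIn_subset {S : Set V} {u : V} (hu : u ∈ S) : componentIn T S u ⊆ S :=
  fun _ hw => ReachableIn.mem hw hu

lemma mem_componentIn_of_adj {S : Set V} {u a b : V} (hu : u ∈ S) (ha : a ∈ componentIn T S u)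
    (hb : b ∈ S) (hab : T.Adj a b) : b ∈ componentIn T S u :=
  Relation.ReflTransGen.tail ha ⟨componentIn_subset hu ha, hb, hab⟩

lemma connected_induce_componentIn {S : Set V} {u : V} :
    (T.induce (componentIn T S u)).Connected := by
  refine (induce_connected_iff_reachableIn mem_componentIn_self).mpr fun w hw => ?_
  induction hw with
  | refl => exact Relation.ReflTransGen.refl
  | tail hab hbc ih => exact ih.tail ⟨hab, hab.tail hbc, hbc.2.2⟩

/-! ### Blocks and pendant sets -/

def IsNonseparable (T : SimpleGraph V) (C : Set V) : Prop :=
  (T.induce C).Connected ∧ ∀ v ∈ C, (T.induce (C \ {v})).Connected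

lemma IsNonseparable.not_subset_singleton {C : Set V} (hC : IsNonseparable T C) (x : V) :
    ¬C ⊆ {x} := fun h => by
  obtain ⟨⟨v, hv⟩⟩ := hC.1.nonempty
  obtain ⟨⟨w, hw⟩⟩ := (hC.2 v hv).nonempty
  exact hw.2 ((h hw.1).trans (h hv).symm)

noncomputable def induceInduceIso (T : SimpleGraph V) (S : Set V) (C : Set S) :
    (T.induce S).induce C ≃g T.induce (Subtype.val '' C) where
  toEquiv := Equiv.Set.image _ C Subtype.val_injective
  map_rel_iff' := Iff.rfl

lemma isNonseparable_induce_iff {S : Set V} {C : Set S} :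
    IsNonseparable (T.induce S) C ↔ IsNonseparable T (Subtype.val '' C) := by
  have hdiff (v : S) : Subtype.val '' (C \ {v}) = Subtype.val '' C \ {v.1} := by
    rw [image_sdiff Subtype.val_injective, image_singleton]
  simp only [IsNonseparable, (induceInduceIso T S _).connected_iff, forall_mem_image]
  exact and_congr_right' (forall₂_congr fun v _ => by rw [hdiff])

lemma Iso.eq_top {G : SimpleGraph V} {H : SimpleGraph W} (e : G ≃g H) (h : G = ⊤) :
    H = ⊤ := by
  subst h
  ext u w
  rw [← e.symm.map_adj_iff]
  simp [e.symm.injective.ne_iff]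

lemma adj_of_induce_eq_top {B : Set V} (h : T.induce B = ⊤) {u w : V} (hu : u ∈ B)
    (hw : w ∈ B) (huw : u ≠ w) : T.Adj u w := by
  have : (T.induce B).Adj ⟨u, hu⟩ ⟨w, hw⟩ :=
    h ▸ (top_adj _ _).mpr fun h => huw congr($h.1)
  exact this

lemma Iso.isOddCycle {G : SimpleGraph V} {H : SimpleGraph W} (e : G ≃g H) (h : IsOddCycle G) :
    IsOddCycle H :=
  ⟨e.connected_iff.mp h.1, fun v => e.apply_symm_apply v ▸ (deg_iso e _).trans (h.2.1 _),
    Nat.card_congr e.toEquiv ▸ h.2.2⟩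

structure IsPendant (T : SimpleGraph V) (x : V) (A : Set V) : Prop where
  not_mem : x ∉ A
  connected : (T.induce A).Connected
  neighborSet_subset : ∀ a ∈ A, T.neighborSet a ⊆ insert x A

namespace IsPendant

variable {x : V} {A : Set V}

lemma insert_eq_univ (hT : T.Connected) (hp : IsPendant T x A) (hx : T.neighborSet x ⊆ A) :
    insert x A = univ :=
  eq_univ_of_closed hT (mem_insert x A) fun a ha b hab => by
    rcases ha with rfl | ha
    · exact mem_insert_of_mem _ (hx hab)
    · exact hp.neighborSet_subset a ha hab

lemma exists_adj (hT : T.Connected) (hp : IsPendant T x A) : ∃ a ∈ A, T.Adj x a := by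
  by_contra! h
  obtain ⟨⟨a, ha⟩⟩ := hp.connected.nonempty
  have hA : A = univ := eq_univ_of_closed hT ha fun a ha b hab =>
    (hp.neighborSet_subset a ha hab).resolve_left fun hb => h a ha (hb ▸ hab.symm)
  exact hp.not_mem (hA ▸ mem_univ x)

lemma connected_insert (hT : T.Connected) (hp : IsPendant T x A) :
    (T.induce (insert x A)).Connected := by
  obtain ⟨a, ha, hxa⟩ := hp.exists_adj hT
  rw [insert_eq]
  exact connected_induce_union Preconnected.of_subsingleton hp.connected.preconnected
    (mem_singleton x) ha hxa

lemma subset_insert_of_isNonseparable (hp : IsPendant T x A) {C : Set V}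
    (hC : IsNonseparable T C) {a : V} (haC : a ∈ C) (haA : a ∈ A) : C ⊆ insert x A := by
  have hconn : (T.induce (C \ {x})).Connected := by
    by_cases hx : x ∈ C
    · exact hC.2 x hx
    · rw [sdiff_singleton_eq_self hx]
      exact hC.1
  have hsub := subset_of_closed hconn ⟨haC, fun h => hp.not_mem (h ▸ haA)⟩ haA
    fun a ha b hb hab => (hp.neighborSet_subset a ha hab).resolve_left hb.2
  intro c hc
  by_cases hcx : c = x
  · exact hcx ▸ mem_insert x A
  · exact mem_insert_of_mem x (hsub ⟨hc, hcx⟩)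

lemma exists_ssubset_of_not_connected (hp : IsPendant T x A) {v : V} (hv : v ∈ A)
    (h : ¬(T.induce (insert x A \ {v})).Connected) : ∃ K ⊂ A, IsPendant T v K := by
  set S := insert x A \ {v}
  have hxS : x ∈ S := ⟨mem_insert x A, fun h => hp.not_mem (h ▸ hv)⟩
  obtain ⟨u, huS, hxu⟩ : ∃ u ∈ S, ¬ReachableIn T S x u := by
    simpa [induce_connected_iff_reachableIn hxS] using h
  have hKS : componentIn T S u ⊆ S := componentIn_subset huS
  have hKA : componentIn T S u ⊆ A \ {v} := fun w hw =>
    ⟨((hKS hw).1).resolve_left fun hwx => hxu (hwx ▸ ReachableIn.symm hw), (hKS hw).2⟩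
  refine ⟨componentIn T S u, hKA.trans_ssubset (sdiff_singleton_ssubset.mpr hv),
    fun hvK => (hKS hvK).2 rfl, connected_induce_componentIn, fun a ha b hab => ?_⟩
  by_cases hbv : b = v
  · exact hbv ▸ mem_insert b _
  · exact mem_insert_of_mem v (mem_componentIn_of_adj huS ha
      ⟨hp.neighborSet_subset a (hKA ha).1 hab, hbv⟩ hab)

lemma isBlock_insert [Finite V] (hT : T.Connected) (hp : IsPendant T x A)
    (hmin : ∀ v K, IsPendant T v K → A.ncard ≤ K.ncard) : IsBlock T (insert x A) := by
  refine ⟨⟨hp.connected_insert hT, fun v hv => ?_⟩, fun B hB hBsep => ?_⟩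
  · rcases hv with rfl | hv
    · rw [insert_sdiff_self_of_notMem hp.not_mem]
      exact hp.connected
    · by_contra h
      obtain ⟨K, hKA, hK⟩ := hp.exists_ssubset_of_not_connected hv h
      exact (ncard_lt_ncard hKA).not_ge (hmin v K hK)
  · obtain ⟨⟨a, ha⟩⟩ := hp.connected.nonempty
    exact (hp.subset_insert_of_isNonseparable hBsep (hB (mem_insert_of_mem x ha)) ha).antisymm hB

end IsPendant

lemma exists_isPendant {x u : V} (hxu : x ≠ u) : ∃ A, IsPendant T x A := by
  have hu : u ∈ ({x}ᶜ : Set V) := hxu.symm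
  refine ⟨componentIn T {x}ᶜ u, fun hx => componentIn_subset hu hx rfl,
    connected_induce_componentIn, fun a ha b hab => ?_⟩
  by_cases hbx : b = x
  · exact hbx ▸ mem_insert b _
  · exact mem_insert_of_mem x (mem_componentIn_of_adj hu ha hbx hab)

lemma exists_isPendant_isBlock [Finite V] (hT : T.Connected) {x u : V} (hxu : x ≠ u) :
    ∃ x A, IsPendant T x A ∧ IsBlock T (insert x A) := by
  obtain ⟨A, hA⟩ := exists_isPendant hxu
  obtain ⟨⟨y, B⟩, hB, hmin⟩ := exists_min_image {p : V × Set V | IsPendant T p.1 p.2}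
    (fun p => p.2.ncard) (toFinite _) ⟨(x, A), hA⟩
  exact ⟨y, B, hB, hB.isBlock_insert hT fun v K hK => hmin (v, K) hK⟩

namespace IsPendant

variable {x : V} {A : Set V}

lemma connected_induce_compl (hT : T.Connected) (hp : IsPendant T x A) :
    (T.induce Aᶜ).Connected := by
  set R := {w | ReachableIn T Aᶜ x w}
  have hx : x ∈ R := Relation.ReflTransGen.refl
  have hK : A ∪ R = univ := eq_univ_of_closed hT (Or.inr hx) fun a ha b hab => by
    by_cases hb : b ∈ A
    · exact Or.inl hb
    rcases ha with ha | ha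
    · exact Or.inr ((hp.neighborSet_subset a ha hab).resolve_right hb ▸ hx)
    · exact Or.inr (Relation.ReflTransGen.tail ha ⟨ReachableIn.mem ha hp.not_mem, hb, hab⟩)
  refine (induce_connected_iff_reachableIn hp.not_mem).mpr fun w hw => ?_
  exact (eq_univ_iff_forall.mp hK w).resolve_left hw

lemma isBlock_image (hp : IsPendant T x A) {B : Set (Aᶜ : Set V)}
    (hB : IsBlock (T.induce Aᶜ) B) : IsBlock T (Subtype.val '' B) := by
  refine ⟨isNonseparable_induce_iff.mp hB.1, fun B' hBB' hB' => ?_⟩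
  have hB'A : B' ⊆ Aᶜ := fun a haB' haA => by
    refine (isNonseparable_induce_iff.mp hB.1).not_subset_singleton x ?_
    rintro _ ⟨c, hc, rfl⟩
    exact (hp.subset_insert_of_isNonseparable hB' haB' haA
      (hBB' (mem_image_of_mem _ hc))).resolve_right c.2
  have himage : Subtype.val '' (Subtype.val ⁻¹' B' : Set (Aᶜ : Set V)) = B' := by
    rw [Subtype.image_preimage_coe, inter_eq_right.mpr hB'A]
  have hP : IsNonseparable (T.induce Aᶜ) (Subtype.val ⁻¹' B') := by
    rw [isNonseparable_induce_iff, himage]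
    exact hB'
  exact himage.symm.trans (congrArg _ (hB.2 _ (fun b hb => hBB' (mem_image_of_mem _ hb)) hP))

lemma isGallaiTree_induce_compl (hT : IsGallaiTree T) (hp : IsPendant T x A) :
    IsGallaiTree (T.induce Aᶜ) := by
  refine ⟨hp.connected_induce_compl hT.1, fun B hB => ?_⟩
  have e := (induceInduceIso T Aᶜ B).symm
  exact (hT.2 _ (hp.isBlock_image hB)).imp (Iso.eq_top e) (Iso.isOddCycle e)

lemma neighborSet_subset_compl (hp : IsPendant T x A) {v : V} (hv : v ∈ Aᶜ) (hvx : v ≠ x) :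
    T.neighborSet v ⊆ Aᶜ := fun b hvb hb =>
  hv ((hp.neighborSet_subset b hb hvb.symm).resolve_left hvx)

lemma deg_induce_compl_of_ne [Finite V] (hp : IsPendant T x A) {v : V} (hv : v ∈ Aᶜ)
    (hvx : v ≠ x) : deg (T.induce Aᶜ) ⟨v, hv⟩ = deg T v :=
  deg_induce_of_neighborSet_subset hv (hp.neighborSet_subset_compl hv hvx)

lemma deg_induce_compl_lt [Finite V] (hT : T.Connected) (hp : IsPendant T x A) :
    deg (T.induce Aᶜ) ⟨x, hp.not_mem⟩ < deg T x := by
  obtain ⟨a, ha, hxa⟩ := hp.exists_adj hT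
  have hpos : 0 < (A ∩ T.neighborSet x).ncard := (ncard_pos (toFinite _)).mpr ⟨a, ha, hxa⟩
  have : deg (T.induce Aᶜ) ⟨x, hp.not_mem⟩ + (A ∩ T.neighborSet x).ncard = deg T x := by
    simpa using deg_induce_add_ncard (T := T) Aᶜ ⟨x, hp.not_mem⟩
  omega

lemma two_mul_edgeCount_eq [Finite V] (hp : IsPendant T x A) :
    2 * edgeCount T = 2 * edgeCount (T.induce Aᶜ) + (A ∩ T.neighborSet x).ncard +
      ∑ᶠ a ∈ A, deg T a := by
  classical
  have := Fintype.ofFinite V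
  have hcompl : ∑ v ∈ A.toFinsetᶜ, deg T v =
      ∑ v : (Aᶜ : Set V), (deg (T.induce Aᶜ) v + (A ∩ T.neighborSet v).ncard) := by
    rw [Finset.sum_subtype _ (p := (· ∈ Aᶜ)) (fun v => by simp)]
    exact Finset.sum_congr rfl fun v _ => by
      simpa using (deg_induce_add_ncard (T := T) Aᶜ v).symm
  have hcross :
      ∑ v : (Aᶜ : Set V), (A ∩ T.neighborSet v).ncard = (A ∩ T.neighborSet x).ncard := by
    refine Fintype.sum_eq_single (⟨x, hp.not_mem⟩ : (Aᶜ : Set V)) fun v hvx => ?_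
    rw [ncard_eq_zero, ← disjoint_iff_inter_eq_empty, disjoint_comm,
      ← subset_compl_iff_disjoint_right]
    exact hp.neighborSet_subset_compl v.2 fun h => hvx (Subtype.ext h)
  rw [two_mul_edgeCount, two_mul_edgeCount, ← Finset.sum_compl_add_sum A.toFinset, hcompl,
    Finset.sum_add_distrib, hcross, finsum_mem_eq_toFinset_sum]

lemma image_degEq_subset [Finite V] (hT : T.Connected) (hp : IsPendant T x A) {d : ℕ}
    (hx : deg T x ≤ d) :
    Subtype.val '' {v : (Aᶜ : Set V) | deg (T.induce Aᶜ) v = d} ⊆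
      {v | deg T v = d} \ {x} := by
  rintro _ ⟨v, hv, rfl⟩
  by_cases hvx : v.1 = x
  · obtain rfl : v = ⟨x, hp.not_mem⟩ := Subtype.ext hvx
    exact absurd hx (hv ▸ hp.deg_induce_compl_lt hT).not_ge
  · exact ⟨(hp.deg_induce_compl_of_ne v.2 hvx).symm.trans hv, hvx⟩

noncomputable def degEqEmbedding [Finite V] (hT : T.Connected) (hp : IsPendant T x A) {d : ℕ}
    (hx : deg T x ≤ d) :
    (T.induce Aᶜ).induce {v | deg (T.induce Aᶜ) v = d} ↪g T.induce {v | deg T v = d} :=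
  (induceHomOfLE _ ((hp.image_degEq_subset hT hx).trans sdiff_subset)).comp
    (induceInduceIso T Aᶜ _).toEmbedding

lemma indepNumDegEq_induce_compl_le [Finite V] (hT : T.Connected) (hp : IsPendant T x A)
    {d : ℕ} (hx : deg T x ≤ d) : indepNumDegEq d (T.induce Aᶜ) ≤ indepNumDegEq d T :=
  indepNum_le_of_embedding (hp.degEqEmbedding hT hx)

lemma indepNumDegEq_induce_compl_add_one_le [Finite V] (hT : T.Connected)
    (hp : IsPendant T x A) {d : ℕ} (hx : deg T x ≤ d) {z : V} (hzA : z ∈ A)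
    (hz : deg T z = d) :
    indepNumDegEq d (T.induce Aᶜ) + 1 ≤ indepNumDegEq d T := by
  refine indepNum_add_one_le_of_embedding (hp.degEqEmbedding hT hx) (z := ⟨z, hz⟩) fun v => ?_
  have hv := hp.image_degEq_subset hT hx (mem_image_of_mem _ v.2)
  refine ⟨fun h => v.1.2 (congrArg Subtype.val h ▸ hzA), fun h => ?_⟩
  exact (hp.neighborSet_subset z hzA h).elim hv.2 v.1.2

end IsPendant

/-! ### The inductive step -/

-- The conclusion and the hypotheses of the theorem, for `k = m + 2`.
def EdgeBound (m : ℕ) (T : SimpleGraph V) : Prop :=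
  2 * edgeCount T ≤ m * Nat.card V + 2 * indepNumDegEq (m + 1) T

structure IsAdmissible (m : ℕ) (T : SimpleGraph V) : Prop where
  isGallaiTree : IsGallaiTree T
  not_iso_top : IsEmpty (T ≃g (⊤ : SimpleGraph (Fin (m + 2))))
  deg_le : ∀ v, deg T v ≤ m + 1

lemma isEmpty_iso_top_of_deg_le {m : ℕ} {v : V} (hv : deg T v ≤ m) :
    IsEmpty (T ≃g (⊤ : SimpleGraph (Fin (m + 2)))) :=
  ⟨fun e => by simp [← deg_iso e v, deg_top] at hv⟩

lemma edgeBound_of_deg_le [Finite V] {m : ℕ} (h : ∀ v, deg T v ≤ m) : EdgeBound m T := by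
  have := Fintype.ofFinite V
  unfold EdgeBound
  rw [two_mul_edgeCount, Nat.card_eq_fintype_card]
  calc ∑ v, deg T v ≤ ∑ _v : V, m := Finset.sum_le_sum fun v _ => h v
    _ ≤ _ := by simp [mul_comm]

namespace IsPendant

variable {x : V} {A : Set V}

lemma isAdmissible_induce_compl [Finite V] {m : ℕ} (hT : IsAdmissible m T)
    (hp : IsPendant T x A) : IsAdmissible m (T.induce Aᶜ) where
  isGallaiTree := hp.isGallaiTree_induce_compl hT.isGallaiTree
  not_iso_top := isEmpty_iso_top_of_deg_le <| Nat.le_of_lt_succ <|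
    (hp.deg_induce_compl_lt hT.isGallaiTree.1).trans_le (hT.deg_le x)
  deg_le v := (deg_induce_le _ v).trans (hT.deg_le v)

lemma edgeBound_of_induce_compl [Finite V] {m j : ℕ} (hp : IsPendant T x A)
    (h : EdgeBound m (T.induce Aᶜ))
    (hβ : indepNumDegEq (m + 1) (T.induce Aᶜ) + j ≤ indepNumDegEq (m + 1) T)
    (hbal : (A ∩ T.neighborSet x).ncard + ∑ᶠ a ∈ A, deg T a ≤ m * A.ncard + 2 * j) :
    EdgeBound m T := by
  have hcard : Nat.card (Aᶜ : Set V) + A.ncard = Nat.card V := by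
    rw [Nat.card_coe_set_eq, add_comm, ncard_add_ncard_compl]
  unfold EdgeBound at h ⊢
  rw [hp.two_mul_edgeCount_eq, ← hcard, mul_add]
  omega

lemma insert_of_eq_singleton (hT : T.Connected) (hp : IsPendant T x A) {y : V}
    (hy : Aᶜ ∩ T.neighborSet x = {y}) : IsPendant T y (insert x A) := by
  have hyx : y ∈ Aᶜ ∩ T.neighborSet x := hy ▸ mem_singleton y
  refine ⟨?_, hp.connected_insert hT, fun b hb c hbc => ?_⟩
  · rintro (h | h)
    · exact T.notMem_neighborSet_self (h ▸ hyx.2)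
    · exact hyx.1 h
  rcases hb with rfl | hb
  · by_cases hc : c ∈ A
    · exact mem_insert_of_mem _ (mem_insert_of_mem _ hc)
    · exact (hy ▸ ⟨hc, hbc⟩ : c ∈ ({y} : Set V)) ▸ mem_insert c _
  · exact mem_insert_of_mem _ (hp.neighborSet_subset b hb hbc)

lemma ncard_insert_inter_neighborSet_le_one (hp : IsPendant T x A) {y : V}
    (hy : y ∉ insert x A) : (insert x A ∩ T.neighborSet y).ncard ≤ 1 := by
  refine (ncard_le_ncard (t := {x}) ?_).trans (ncard_singleton x).le
  rintro b ⟨rfl | hb, hby⟩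
  · rfl
  · exact absurd (hp.neighborSet_subset b hb hby.symm) hy

lemma deg_eq_of_regular [Finite V] (hp : IsPendant T x A) {d : ℕ}
    (hreg : ∀ v : (insert x A : Set V), deg (T.induce (insert x A)) v = d) {a : V}
    (ha : a ∈ A) : deg T a = d :=
  (deg_induce_of_neighborSet_subset (mem_insert_of_mem x ha)
    (hp.neighborSet_subset a ha)).symm.trans (hreg _)

lemma ncard_inter_neighborSet_eq_of_regular {d : ℕ}
    (hreg : ∀ v : (insert x A : Set V), deg (T.induce (insert x A)) v = d) :
    (A ∩ T.neighborSet x).ncard = d := by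
  rw [← hreg ⟨x, mem_insert x A⟩, deg_induce,
    insert_inter_of_notMem T.notMem_neighborSet_self]

lemma edgeBound_of_regular [Finite V] {m d : ℕ} (hT : IsAdmissible m T) (hp : IsPendant T x A)
    (ih : ∀ y B, IsPendant T y B → EdgeBound m (T.induce Bᶜ))
    (hreg : ∀ v : (insert x A : Set V), deg (T.induce (insert x A)) v = d) (hd : d ≤ m) :
    EdgeBound m T := by
  have hconn := hT.isGallaiTree.1
  have hxA := ncard_inter_neighborSet_eq_of_regular hreg
  have hdA : d ≤ A.ncard := hxA ▸ ncard_le_ncard inter_subset_left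
  have hsumA : ∑ᶠ a ∈ A, deg T a = d * A.ncard :=
    finsum_mem_eq_mul_ncard (toFinite A) fun a ha => hp.deg_eq_of_regular hreg ha
  have hdegx := deg_eq_ncard_add_ncard (T := T) A x
  rcases (Aᶜ ∩ T.neighborSet x).eq_empty_or_nonempty with hout | hout
  · have huniv : insert x A = univ := hp.insert_eq_univ hconn fun b hb => by
      by_contra hbA
      exact hout.subset ⟨hbA, hb⟩
    refine edgeBound_of_deg_le fun v => ?_
    rw [← deg_induce_of_neighborSet_subset (huniv ▸ mem_univ v) (huniv ▸ subset_univ _), hreg]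
    exact hd
  rcases hd.lt_or_eq with hlt | rfl
  · refine hp.edgeBound_of_induce_compl (j := 0) (ih x A hp)
      (hp.indepNumDegEq_induce_compl_le hconn (hT.deg_le x)) ?_
    rw [hxA, hsumA]
    nlinarith
  -- `x` has exactly one neighbour `y` outside `A`, and `insert x A` is removed instead.
  have hdx := hT.deg_le x
  have hpos := (ncard_pos (toFinite _)).mpr hout
  obtain ⟨y, hy⟩ := ncard_eq_one.mp (by omega : (Aᶜ ∩ T.neighborSet x).ncard = 1)
  have hpy := hp.insert_of_eq_singleton hconn hy
  refine hpy.edgeBound_of_induce_compl (j := 1) (ih y _ hpy)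
    (hpy.indepNumDegEq_induce_compl_add_one_le hconn (hT.deg_le y) (mem_insert x A)
      (by omega)) ?_
  have hy1 := hp.ncard_insert_inter_neighborSet_le_one hpy.not_mem
  rw [finsum_mem_insert _ hp.not_mem (toFinite A), hsumA, ncard_insert_of_notMem hp.not_mem]
  nlinarith

lemma ncard_le_of_induce_eq_top [Finite V] {m : ℕ} (hT : IsAdmissible m T)
    (hp : IsPendant T x A) (htop : T.induce (insert x A) = ⊤) : A.ncard ≤ m := by
  have hadj {u w : V} (hu : u ∈ insert x A) (hw : w ∈ insert x A) (huw : u ≠ w) : T.Adj u w :=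
    adj_of_induce_eq_top htop hu hw huw
  have hAx : A ⊆ T.neighborSet x := fun a ha =>
    hadj (mem_insert x A) (mem_insert_of_mem x ha) fun h => hp.not_mem (h ▸ ha)
  have hdeg : (T.neighborSet x).ncard ≤ m + 1 := deg_eq_ncard T x ▸ hT.deg_le x
  refine Nat.le_of_lt_succ ((ncard_le_ncard hAx).trans hdeg |>.lt_of_ne fun hA =>
    hT.not_iso_top.false ?_)
  have hN : A = T.neighborSet x := eq_of_subset_of_ncard_le hAx (hA ▸ hdeg)
  have huniv := hp.insert_eq_univ hT.isGallaiTree.1 hN.symm.subset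
  have hTtop : T = ⊤ := by
    ext u w
    exact ⟨Adj.ne, hadj (huniv ▸ mem_univ u) (huniv ▸ mem_univ w)⟩
  have hcard : Nat.card V = m + 2 := by
    rw [← ncard_univ, ← huniv, ncard_insert_of_notMem hp.not_mem, hA]
  exact hTtop ▸ Iso.completeGraph (Finite.equivFinOfCardEq hcard)

end IsPendant

theorem edgeBound_of_isAdmissible {m : ℕ} (hm : 2 ≤ m) [Finite V] (hT : IsAdmissible m T) :
    EdgeBound m T := by
  induction V using Finite.induction_subsingleton_or_nontrivial with
  | hbase V =>
    refine edgeBound_of_deg_le fun v => ?_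
    rw [deg_eq_ncard, (ncard_eq_zero (toFinite _)).mpr
      (eq_empty_of_forall_notMem fun w hw => hw.ne (Subsingleton.elim v w))]
    exact Nat.zero_le m
  | hstep V ih =>
    have ihA (y : V) (B : Set V) (hp : IsPendant T y B) : EdgeBound m (T.induce Bᶜ) := by
      obtain ⟨⟨b, hb⟩⟩ := hp.connected.nonempty
      exact ih _ (Finite.card_subtype_lt (p := (· ∈ Bᶜ)) (not_not.mpr hb))
        (hp.isAdmissible_induce_compl hT)
    obtain ⟨x, u, hxu⟩ := exists_pair_ne V
    obtain ⟨x, A, hp, hB⟩ := exists_isPendant_isBlock hT.isGallaiTree.1 hxu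
    rcases hT.isGallaiTree.2 _ hB with htop | hcycle
    · refine hp.edgeBound_of_regular hT ihA (fun v => ?_) (hp.ncard_le_of_induce_eq_top hT htop)
      rw [htop, deg_top, Nat.card_coe_set_eq, ncard_insert_of_notMem hp.not_mem,
        Nat.add_sub_cancel]
    · exact hp.edgeBound_of_regular hT ihA hcycle.2.1 hm

end Paper

/-- If `k ≥ 4` and `T ≠ K_k` is a Gallai tree with maximum degree at most `k-1`, then
`2‖T‖ ≤ (k-2)|T| + 2β_k(T)`, where `β_k(T)` is the independence number of the subgraph
induced on the vertices of degree exactly `k-1`. -/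
theorem stmt_0 {V : Type*} [Fintype V] (k : ℕ) (hk : 4 ≤ k) (T : SimpleGraph V)
    (hGallai : IsGallaiTree T)
    (hne : IsEmpty (T ≃g (⊤ : SimpleGraph (Fin k))))
    (hΔ : ∀ v, deg T v ≤ k - 1) :
    2 * edgeCount T ≤ (k - 2) * Fintype.card V +
      2 * Paper.indepNum (T.induce {v | deg T v = k - 1}) := by
  obtain ⟨m, rfl⟩ : ∃ m, k = m + 2 := ⟨k - 2, by omega⟩
  have h := edgeBound_of_isAdmissible (by omega : 2 ≤ m) ⟨hGallai, hne, hΔ⟩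
  rwa [EdgeBound, indepNumDegEq, ← indepNum_eq, Nat.card_eq_fintype_card] at h
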